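/- Let G be a finite simple graph with n ≥ 2 vertices and minimum degree δ ≥ 1 (i.e., G has no isolated vertices). Then avd(G) ≤ 3n/4. -/

import Mathlib

/-!
Split a dominating set `S` into its redundant vertices `v` (`S.erase v` still dominates) and its
critical ones. Deleting a redundant vertex is a bijection from pairs `(S, v)` with `v` redundant
in `S` onto pairs `(T, v)` with `T` dominating and `v ∉ T`, so on average there are as many
redundant vertices as vertices outside `S`. A critical vertex `v` either has a private neighbour
outside `S`, and distinct vertices have distinct ones, or `v` is the only vertex that `S.erase v`
fails to dominate; then adding a fixed neighbour of `v` to `S` makes `v` redundant, and this is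
injective. Summing over all dominating sets gives `∑ |S| ≤ 3 ∑ |Sᶜ|`, i.e. `4 ∑ |S| ≤ 3 n |D(G)|`.
-/

open Finset

/-- `S` is a dominating set of `G`: every vertex is in `S` or adjacent to a vertex of `S`. -/
def SimpleGraph.IsDomSet {V : Type*} (G : SimpleGraph V) (S : Finset V) : Prop :=
  ∀ v : V, v ∈ S ∨ ∃ u ∈ S, G.Adj u v

/-- The family of all dominating sets of `G`. -/
noncomputable def SimpleGraph.domSets {V : Type*} [Fintype V] (G : SimpleGraph V) :
    Finset (Finset V) :=
  @Finset.filter _ (fun S => G.IsDomSet S) (Classical.decPred _) Finset.univ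

/-- The average order (cardinality) of a dominating set of `G`. -/
noncomputable def SimpleGraph.avd {V : Type*} [Fintype V] (G : SimpleGraph V) : ℝ :=
  (∑ S ∈ G.domSets, (S.card : ℝ)) / (G.domSets).card

namespace SimpleGraph

variable {V : Type*} (G : SimpleGraph V)

-- `G.IsDomSet S` is definitionally `∀ w, G.Dominates S w`.
def Dominates (S : Finset V) (w : V) : Prop := w ∈ S ∨ ∃ u ∈ S, G.Adj u w

variable {G}

theorem Dominates.mono {S T : Finset V} (h : S ⊆ T) {w : V} :
    G.Dominates S w → G.Dominates T w
  | .inl hw => .inl (h hw)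
  | .inr ⟨u, hu, huw⟩ => .inr ⟨u, h hu, huw⟩

theorem IsDomSet.mono {S T : Finset V} (hS : G.IsDomSet S) (h : S ⊆ T) : G.IsDomSet T :=
  fun w => Dominates.mono h (hS w)

theorem mem_domSets [Fintype V] {S : Finset V} : S ∈ G.domSets ↔ G.IsDomSet S := by
  classical
  simp [domSets]

variable [DecidableEq V]

theorem eq_of_not_dominates_erase {S : Finset V} (hS : G.IsDomSet S) {v₁ v₂ w : V}
    (h₁ : ¬ G.Dominates (S.erase v₁) w) (h₂ : ¬ G.Dominates (S.erase v₂) w) : v₁ = v₂ := by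
  simp only [Dominates, mem_erase, not_or, not_exists, not_and] at h₁ h₂
  rcases hS w with hw | ⟨u, hu, huw⟩ <;> grind

variable (G)

open Classical in
noncomputable def redundantVerts (S : Finset V) : Finset V :=
  {v ∈ S | G.IsDomSet (S.erase v)}

open Classical in
noncomputable def extPrivateVerts (S : Finset V) : Finset V :=
  {v ∈ S | ∃ w ∉ S, ¬ G.Dominates (S.erase v) w}

open Classical in
noncomputable def soleSelfPrivateVerts (S : Finset V) : Finset V :=
  {v ∈ S | ¬ G.Dominates (S.erase v) v ∧ ∀ w ≠ v, G.Dominates (S.erase v) w}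

variable {G}

theorem mem_redundantVerts {S : Finset V} {v : V} :
    v ∈ G.redundantVerts S ↔ v ∈ S ∧ G.IsDomSet (S.erase v) := by
  classical
  simp [redundantVerts]

theorem mem_extPrivateVerts {S : Finset V} {v : V} :
    v ∈ G.extPrivateVerts S ↔ v ∈ S ∧ ∃ w ∉ S, ¬ G.Dominates (S.erase v) w := by
  classical
  simp [extPrivateVerts]

theorem mem_soleSelfPrivateVerts {S : Finset V} {v : V} :
    v ∈ G.soleSelfPrivateVerts S ↔
      v ∈ S ∧ ¬ G.Dominates (S.erase v) v ∧ ∀ w ≠ v, G.Dominates (S.erase v) w := by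
  classical
  simp [soleSelfPrivateVerts]

theorem subset_redundantVerts_union (S : Finset V) :
    S ⊆ G.redundantVerts S ∪ G.extPrivateVerts S ∪ G.soleSelfPrivateVerts S := by
  intro v hv
  simp only [mem_union, mem_redundantVerts, mem_extPrivateVerts, mem_soleSelfPrivateVerts]
  by_cases hred : G.IsDomSet (S.erase v)
  · exact .inl (.inl ⟨hv, hred⟩)
  obtain ⟨w, hw⟩ : ∃ w, ¬ G.Dominates (S.erase v) w := not_forall.1 hred
  by_cases hext : ∃ w ≠ v, ¬ G.Dominates (S.erase v) w
  · obtain ⟨w', hw'v, hw'⟩ := hext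
    exact .inl (.inr ⟨hv, w', fun hw'S => hw' (.inl (mem_erase.2 ⟨hw'v, hw'S⟩)), hw'⟩)
  · push Not at hext
    obtain rfl : w = v := by_contra fun hwv => hw (hext w hwv)
    exact .inr ⟨hv, hw, hext⟩

theorem card_extPrivateVerts_le [Fintype V] {S : Finset V} (hS : G.IsDomSet S) :
    #(G.extPrivateVerts S) ≤ #Sᶜ :=
  card_le_card_of_forall_subsingleton (fun v w => ¬ G.Dominates (S.erase v) w)
    (fun v hv => by
      obtain ⟨-, w, hwS, hw⟩ := mem_extPrivateVerts.1 hv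
      exact ⟨w, mem_compl.2 hwS, hw⟩)
    (fun _ _ _ hv₁ _ hv₂ => eq_of_not_dominates_erase hS hv₁.2 hv₂.2)

theorem notMem_of_adj_of_mem_soleSelfPrivateVerts {S : Finset V} {v u : V}
    (hv : v ∈ G.soleSelfPrivateVerts S) (huv : G.Adj v u) : u ∉ S := fun huS =>
  (mem_soleSelfPrivateVerts.1 hv).2.1 (.inr ⟨u, mem_erase.2 ⟨huv.ne', huS⟩, huv.symm⟩)

theorem mem_redundantVerts_insert_of_adj {S : Finset V} {v u : V}
    (hv : v ∈ G.soleSelfPrivateVerts S) (huv : G.Adj v u) :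
    v ∈ G.redundantVerts (insert u S) := by
  obtain ⟨hvS, -, hothers⟩ := mem_soleSelfPrivateVerts.1 hv
  refine mem_redundantVerts.2 ⟨mem_insert_of_mem hvS, fun w => ?_⟩
  rw [erase_insert_of_ne huv.ne']
  rcases eq_or_ne w v with rfl | hwv
  · exact .inr ⟨u, mem_insert_self _ _, huv.symm⟩
  · exact (hothers w hwv).mono (subset_insert _ _)

variable [Fintype V]

theorem sum_card_redundantVerts :
    ∑ S ∈ G.domSets, #(G.redundantVerts S) = ∑ S ∈ G.domSets, #Sᶜ := by
  simp only [← card_sigma]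
  refine card_bij' (fun p _ => ⟨p.1.erase p.2, p.2⟩) (fun p _ => ⟨insert p.2 p.1, p.2⟩)
    ?_ ?_ ?_ ?_
  · rintro ⟨S, v⟩ h
    simp only [mem_sigma, mem_redundantVerts] at h
    simp [mem_domSets, h.2.2]
  · rintro ⟨T, v⟩ h
    simp only [mem_sigma, mem_domSets, mem_compl] at h
    simp [mem_domSets, mem_redundantVerts, erase_insert h.2, h.1, h.1.mono (subset_insert _ _)]
  · rintro ⟨S, v⟩ h
    simp [insert_erase (mem_redundantVerts.1 (mem_sigma.1 h).2).1]
  · rintro ⟨T, v⟩ h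
    simp [erase_insert (mem_compl.1 (mem_sigma.1 h).2)]

theorem sum_card_soleSelfPrivateVerts_le (hG : ∀ v, ∃ u, G.Adj v u) :
    ∑ S ∈ G.domSets, #(G.soleSelfPrivateVerts S) ≤ ∑ S ∈ G.domSets, #(G.redundantVerts S) := by
  choose u hu using hG
  simp only [← card_sigma]
  refine card_le_card_of_injOn (fun p => ⟨insert (u p.2) p.1, p.2⟩) (fun p hp => ?_) ?_
  · have hred := mem_redundantVerts_insert_of_adj (mem_sigma.1 hp).2 (hu p.2)
    exact mem_sigma.2 ⟨mem_domSets.2 ((mem_redundantVerts.1 hred).2.mono (erase_subset _ _)), hred⟩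
  · rintro ⟨S₁, v⟩ h₁ ⟨S₂, v'⟩ h₂ heq
    obtain ⟨hS, rfl⟩ : insert (u v) S₁ = insert (u v') S₂ ∧ v = v' := by
      simpa using heq
    have hu₁ : u v ∉ S₁ := notMem_of_adj_of_mem_soleSelfPrivateVerts (mem_sigma.1 h₁).2 (hu v)
    have hu₂ : u v ∉ S₂ := notMem_of_adj_of_mem_soleSelfPrivateVerts (mem_sigma.1 h₂).2 (hu v)
    rw [← erase_insert hu₁, hS, erase_insert hu₂]

theorem four_mul_sum_card_domSets_le (hG : ∀ v, ∃ u, G.Adj v u) :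
    4 * ∑ S ∈ G.domSets, #S ≤ 3 * (Fintype.card V * #G.domSets) := by
  have hsplit : ∑ S ∈ G.domSets, #S ≤ ∑ S ∈ G.domSets, #(G.redundantVerts S) +
      ∑ S ∈ G.domSets, #Sᶜ + ∑ S ∈ G.domSets, #(G.soleSelfPrivateVerts S) := by
    simp only [← sum_add_distrib]
    refine sum_le_sum fun S hS => (card_le_card (subset_redundantVerts_union (G := G) S)).trans ?_
    grw [card_union_le, card_union_le, card_extPrivateVerts_le (mem_domSets.1 hS)]
  have hcompl : ∑ S ∈ G.domSets, #S + ∑ S ∈ G.domSets, #Sᶜ = Fintype.card V * #G.domSets := by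
    simp [← sum_add_distrib, card_add_card_compl, mul_comm]
  have hred := sum_card_redundantVerts (G := G)
  have hself := sum_card_soleSelfPrivateVerts_le hG
  omega

end SimpleGraph

theorem avd_le_three_quarters_general {V : Type*} [Fintype V] (G : SimpleGraph V)
    [DecidableRel G.Adj] (n : ℕ) (hn : n = Fintype.card V)
    (hδ : 1 ≤ G.minDegree) :
    G.avd ≤ 3 * (n : ℝ) / 4 := by
  classical
  have hG : ∀ v, ∃ u, G.Adj v u := fun v =>
    (G.degree_pos_iff_exists_adj v).1 (hδ.trans (G.minDegree_le_degree v))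
  have hD : 0 < #G.domSets :=
    card_pos.2 ⟨univ, SimpleGraph.mem_domSets.2 fun v => .inl (mem_univ v)⟩
  have hcount : (4 : ℝ) * ∑ S ∈ G.domSets, (#S : ℝ) ≤ 3 * (Fintype.card V * #G.domSets) := by
    exact_mod_cast SimpleGraph.four_mul_sum_card_domSets_le hG
  rw [SimpleGraph.avd, div_le_iff₀ (by exact_mod_cast hD), hn]
  linarith

/-- For a graph `G` with `n ≥ 2` vertices and minimum degree `δ ≥ 1`
(no isolated vertices), `avd(G) ≤ 3n/4`. -/
theorem avd_le_three_quarters {V : Type*} [Fintype V] (G : SimpleGraph V)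
    [DecidableRel G.Adj] (n : ℕ) (hn : n = Fintype.card V) (h2 : 2 ≤ n)
    (hδ : 1 ≤ G.minDegree) :
    G.avd ≤ 3 * (n : ℝ) / 4 :=
  avd_le_three_quarters_general G n hn hδ
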